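/- Let G be the standard adjacency matrix (entries 0 or ε) of an acyclic directed graph on n vertices with longest path length p, let 𝒯_1,…,𝒯_k be diagonal matrices 𝒯_i = diag(τ_{1i},…,τ_{ni}) with real entries τ_{ji} ≥ 0, and let A(i) = (E ⊕ 𝒯_i ⊗ G^T)^{⊗p} ⊗ 𝒯_i and A_k = A(k) ⊗ ⋯ ⊗ A(1). Then ‖A_k‖ ≤ Σ_{i=1}^{k} ‖𝒯_i‖ + p · max_{1≤i≤k} ‖𝒯_i‖, where ‖𝒯_i‖ = max_{1≤j≤n} τ_{ji}. -/

import Mathlib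

/-- The max-plus carrier set `ℝ ∪ {ε}` with `ε = -∞`, realized as `WithBot ℝ`.
The max-plus addition `⊕` is `⊔` (max, with `ε` as null element) and the
max-plus multiplication `⊗` is `+` (with `x + ⊥ = ⊥ + x = ⊥`). -/
abbrev MP : Type := WithBot ℝ

/-- Max-plus matrix product: `(X ⊗ Y) i j = max_k (X i k + Y k j)`. -/
noncomputable def mpMul {n : ℕ} (X Y : Matrix (Fin n) (Fin n) MP) : Matrix (Fin n) (Fin n) MP :=
  Matrix.of fun i j => Finset.univ.sup fun k => X i k + Y k j

/-- Max-plus matrix sum: entrywise maximum. -/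
noncomputable def mpAdd {n : ℕ} (X Y : Matrix (Fin n) (Fin n) MP) : Matrix (Fin n) (Fin n) MP :=
  Matrix.of fun i j => X i j ⊔ Y i j

/-- The max-plus identity matrix `E`: `0` on the diagonal, `ε` off the diagonal. -/
noncomputable def mpOne (n : ℕ) : Matrix (Fin n) (Fin n) MP :=
  Matrix.of fun i j => if i = j then (0 : MP) else ⊥

/-- Max-plus matrix power: `X^{⊗0} = E`, `X^{⊗(q+1)} = X ⊗ X^{⊗q}`. -/
noncomputable def mpPow {n : ℕ} (X : Matrix (Fin n) (Fin n) MP) : ℕ → Matrix (Fin n) (Fin n) MP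
  | 0 => mpOne n
  | q + 1 => mpMul X (mpPow X q)

/-- Max-plus matrix norm: `‖X‖ = max_{i,j} X i j`. -/
noncomputable def mpNorm {n : ℕ} (X : Matrix (Fin n) (Fin n) MP) : MP :=
  Finset.univ.sup fun i => Finset.univ.sup fun j => X i j

/-- A path of exactly `q` edges from `i` to `j` in the directed graph with
adjacency relation `Adj`. -/
def AdjPath {n : ℕ} (Adj : Fin n → Fin n → Prop) (q : ℕ) (i j : Fin n) : Prop :=
  ∃ f : ℕ → Fin n, f 0 = i ∧ f q = j ∧ ∀ t < q, Adj (f t) (f (t + 1))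

/-- A path of exactly `q` edges from `i` to `j` in the graph associated with the
matrix `X` (an edge `(i,j)` exists precisely when `X i j ≠ ε`). -/
def mpPath {n : ℕ} (X : Matrix (Fin n) (Fin n) MP) (q : ℕ) (i j : Fin n) : Prop :=
  AdjPath (fun a b => X a b ≠ ⊥) q i j

/-- The graph associated with `X` is acyclic: no directed cycle. -/
def mpAcyclic {n : ℕ} (X : Matrix (Fin n) (Fin n) MP) : Prop :=
  ∀ i q, 1 ≤ q → ¬ mpPath X q i i

/-- The diagonal matrix `diag (d 1, …, d n)` over the max-plus semiring. -/
noncomputable def diagM {n : ℕ} (d : Fin n → ℝ) : Matrix (Fin n) (Fin n) MP :=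
  Matrix.of fun i j => if i = j then ((d i : ℝ) : MP) else ⊥

/-- The cycle transition matrix `A = (E ⊕ 𝒯 ⊗ Gᵀ)^{⊗p} ⊗ 𝒯` of an acyclic
fork-join network with standard adjacency matrix `G`, longest path length `p`,
and service-time diagonal matrix `𝒯 = diag τ`. -/
noncomputable def mpA {n : ℕ} (G : Matrix (Fin n) (Fin n) MP) (p : ℕ)
    (τ : Fin n → ℝ) : Matrix (Fin n) (Fin n) MP :=
  mpMul (mpPow (mpAdd (mpOne n) (mpMul (diagM τ) G.transpose)) p) (diagM τ)

/-- The accumulated matrix `A_k = A(k) ⊗ ⋯ ⊗ A(1)` (here the `k`-th service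
cycle uses the service times `τ (k-1)`, i.e. cycles are indexed from `0`);
`A_0 = E`. -/
noncomputable def mpAk {n : ℕ} (G : Matrix (Fin n) (Fin n) MP) (p : ℕ)
    (τ : ℕ → Fin n → ℝ) : ℕ → Matrix (Fin n) (Fin n) MP
  | 0 => mpOne n
  | k + 1 => mpMul (mpA G p (τ k)) (mpAk G p τ k)

/-! A finite entry `(a, b)` of `A_k` is at most `Σ_i ‖𝒯_i‖ + q · max_i ‖𝒯_i‖` for some path of
length `q` from `b` to `a` in `G`. This holds for `E` and each `𝒯_i` (with `q = 0`) and for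
`𝒯_i ⊗ Gᵀ` (with `q = 1`, as `G ≤ 0`), and it survives `⊕` and `⊗`: a product concatenates
the paths and adds the bounds. As no path is longer than `p` and `max_i ‖𝒯_i‖ ≥ 0`, every
entry is at most `Σ_i ‖𝒯_i‖ + p · max_i ‖𝒯_i‖`. -/

theorem AdjPath.append {n : ℕ} {Adj : Fin n → Fin n → Prop} {q₁ q₂ : ℕ} {i j l : Fin n}
    (h₁ : AdjPath Adj q₁ i j) (h₂ : AdjPath Adj q₂ j l) : AdjPath Adj (q₁ + q₂) i l := by
  obtain ⟨f, rfl, rfl, hf⟩ := h₁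
  obtain ⟨g, hg₀, rfl, hg⟩ := h₂
  refine ⟨fun t => if t ≤ q₁ then f t else g (t - q₁), by simp, ?_, fun t ht => ?_⟩
  · by_cases hq₂ : q₂ = 0
    · simp [hq₂, hg₀]
    · simp [hq₂]
  · rcases lt_trichotomy t q₁ with h | rfl | h
    · simpa [h.le, Nat.succ_le_of_lt h] using hf t h
    · simpa [hg₀] using hg 0 (by omega)
    · simpa [h.not_ge, show t + 1 - q₁ = t - q₁ + 1 by omega, show ¬ t + 1 ≤ q₁ by omega]
        using hg (t - q₁) (by omega)

section PathBounded

variable {n : ℕ} {G X Y : Matrix (Fin n) (Fin n) MP} {S S' T : ℝ}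

theorem mpPath_zero (a : Fin n) : mpPath G 0 a a :=
  ⟨fun _ => a, rfl, rfl, fun _ h => absurd h (Nat.not_lt_zero _)⟩

theorem mpPath_one {a b : Fin n} (h : G a b ≠ ⊥) : mpPath G 1 a b :=
  ⟨fun t => if t = 0 then a else b, rfl, rfl, fun t ht => by simpa [Nat.lt_one_iff.1 ht] using h⟩

-- The path runs from `b` to `a` because the matrices `A` are built from `Gᵀ`.
def PathBounded (G : Matrix (Fin n) (Fin n) MP) (S T : ℝ) (X : Matrix (Fin n) (Fin n) MP) :
    Prop :=
  ∀ a b (x : ℝ), X a b = x → ∃ q : ℕ, mpPath G q b a ∧ x ≤ S + q * T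

theorem pathBounded_mpOne : PathBounded G 0 T (mpOne n) := by
  intro a b x hx
  by_cases hab : a = b
  · subst hab
    refine ⟨0, mpPath_zero a, ?_⟩
    simp_all [mpOne]
  · simp [mpOne, hab] at hx

theorem pathBounded_diagM {d : Fin n → ℝ} (hd : ∀ j, d j ≤ S) : PathBounded G S T (diagM d) := by
  intro a b x hx
  by_cases hab : a = b
  · subst hab
    refine ⟨0, mpPath_zero a, ?_⟩
    simp only [diagM, Matrix.of_apply, if_pos, WithBot.coe_inj] at hx
    simpa [← hx] using hd a
  · simp [diagM, hab] at hx

theorem pathBounded_transpose (hG : ∀ i j, G i j ≤ 0) : PathBounded G (-T) T G.transpose := by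
  intro a b x hx
  rw [Matrix.transpose_apply] at hx
  refine ⟨1, mpPath_one (by simp [hx]), ?_⟩
  have := hG b a
  rw [hx] at this
  simpa using WithBot.coe_le_coe.1 this

theorem PathBounded.mpAdd (hX : PathBounded G S T X) (hY : PathBounded G S T Y) :
    PathBounded G S T (mpAdd X Y) := by
  intro a b x hx
  rcases max_choice (X a b) (Y a b) with h | h
  · exact hX a b x (h ▸ hx)
  · exact hY a b x (h ▸ hx)

theorem PathBounded.mpMul (hX : PathBounded G S T X) (hY : PathBounded G S' T Y) :
    PathBounded G (S + S') T (mpMul X Y) := by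
  intro a b x hx
  obtain ⟨c, -, hc⟩ := Finset.exists_mem_eq_sup Finset.univ ⟨a, Finset.mem_univ a⟩
    fun c => X a c + Y c b
  obtain ⟨y, z, hy, hz, rfl⟩ := WithBot.add_eq_coe.1 (hc ▸ hx : X a c + Y c b = x)
  obtain ⟨q₁, hq₁, hy⟩ := hX a c y hy.symm
  obtain ⟨q₂, hq₂, hz⟩ := hY c b z hz.symm
  refine ⟨q₂ + q₁, AdjPath.append hq₂ hq₁, ?_⟩
  push_cast
  linarith

theorem PathBounded.mpPow (hX : PathBounded G 0 T X) (r : ℕ) : PathBounded G 0 T (mpPow X r) := by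
  induction r with
  | zero => exact pathBounded_mpOne
  | succ r ih => simpa only [_root_.mpPow, zero_add] using hX.mpMul ih

theorem pathBounded_mpA (hG : ∀ i j, G i j ≤ 0) (p : ℕ) {d : Fin n → ℝ} (hS : ∀ j, d j ≤ S)
    (hST : S ≤ T) : PathBounded G S T (mpA G p d) := by
  have hstep : PathBounded G 0 T (mpAdd (mpOne n) (mpMul (diagM d) G.transpose)) := by
    refine pathBounded_mpOne.mpAdd ?_
    simpa only [add_neg_cancel] using
      (pathBounded_diagM fun j => (hS j).trans hST).mpMul (pathBounded_transpose (T := T) hG)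
  simpa only [mpA, zero_add] using (hstep.mpPow p).mpMul (pathBounded_diagM hS)

theorem pathBounded_mpAk (hG : ∀ i j, G i j ≤ 0) (p : ℕ) {τ : ℕ → Fin n → ℝ} {σ : ℕ → ℝ}
    (hσ : ∀ i j, τ i j ≤ σ i) {k : ℕ} (hσT : ∀ i < k, σ i ≤ T) :
    PathBounded G (∑ i ∈ Finset.range k, σ i) T (mpAk G p τ k) := by
  induction k with
  | zero => simpa only [mpAk, Finset.range_zero, Finset.sum_empty] using pathBounded_mpOne
  | succ k ih =>
    rw [Finset.sum_range_succ, add_comm]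
    exact (pathBounded_mpA hG p (hσ k) (hσT k k.lt_succ_self)).mpMul
      (ih fun i hi => hσT i (hi.trans k.lt_succ_self))

theorem PathBounded.mpNorm_le {p : ℕ} (hub : ∀ q i j, mpPath G q i j → q ≤ p) (hT : 0 ≤ T)
    (hX : PathBounded G S T X) : mpNorm X ≤ ((S + p * T : ℝ) : MP) := by
  refine Finset.sup_le fun a _ => Finset.sup_le fun b _ => ?_
  induction hx : X a b using WithBot.recBotCoe with
  | bot => exact bot_le
  | coe x =>
    obtain ⟨q, hq, hxq⟩ := hX a b x hx
    have : (q : ℝ) ≤ p := by exact_mod_cast hub q b a hq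
    exact WithBot.coe_le_coe.2 (by nlinarith)

end PathBounded

theorem stmt12_general {n : ℕ} (hn : 0 < n) (G : Matrix (Fin n) (Fin n) MP)
    (hG : ∀ i j, G i j = 0 ∨ G i j = ⊥)
    (p : ℕ)
    (hub : ∀ q i j, mpPath G q i j → q ≤ p)
    (τ : ℕ → Fin n → ℝ) (hτ : ∀ i j, 0 ≤ τ i j) (k : ℕ) (hk : 0 < k) :
    mpNorm (mpAk G p τ k)
      ≤ (((∑ i ∈ Finset.range k,
            Finset.univ.sup' (Finset.univ_nonempty_iff.2 ⟨⟨0, hn⟩⟩) fun j => τ i j)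
          + (p : ℝ) *
            ((Finset.range k).sup' (Finset.nonempty_range_iff.2 hk.ne') fun i =>
              Finset.univ.sup' (Finset.univ_nonempty_iff.2 ⟨⟨0, hn⟩⟩) fun j => τ i j) : ℝ) : MP) := by
  set σ : ℕ → ℝ := fun i => Finset.univ.sup' (Finset.univ_nonempty_iff.2 ⟨⟨0, hn⟩⟩) fun j => τ i j
  set T : ℝ := (Finset.range k).sup' (Finset.nonempty_range_iff.2 hk.ne') σ
  have hG' : ∀ i j, G i j ≤ 0 := fun i j => (hG i j).elim le_of_eq fun h => h ▸ bot_le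
  have hσ : ∀ i j, τ i j ≤ σ i := fun i j => Finset.le_sup' (fun j => τ i j) (Finset.mem_univ j)
  have hσT : ∀ i < k, σ i ≤ T := fun i hi => Finset.le_sup' σ (Finset.mem_range.2 hi)
  have hT : 0 ≤ T := (hτ 0 ⟨0, hn⟩).trans ((hσ 0 ⟨0, hn⟩).trans (hσT 0 hk))
  exact (pathBounded_mpAk hG' p hσ hσT).mpNorm_le hub hT

/-- For a standard adjacency matrix `G` of an acyclic digraph
(`n ≥ 1` vertices) with longest path length `p` and diagonal matrices `𝒯_i`
with nonnegative real entries (`1 ≤ i ≤ k`, `k ≥ 1`),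
`‖A_k‖ ≤ Σ_{i=1}^k ‖𝒯_i‖ + p · max_{1≤i≤k} ‖𝒯_i‖`, where `‖𝒯_i‖ = max_j τ_{ji}`. -/
theorem stmt12 {n : ℕ} (hn : 0 < n) (G : Matrix (Fin n) (Fin n) MP)
    (hG : ∀ i j, G i j = 0 ∨ G i j = ⊥)
    (hacyc : mpAcyclic G) (p : ℕ)
    (hub : ∀ q i j, mpPath G q i j → q ≤ p)
    (hex : ∃ i j, mpPath G p i j)
    (τ : ℕ → Fin n → ℝ) (hτ : ∀ i j, 0 ≤ τ i j) (k : ℕ) (hk : 0 < k) :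
    mpNorm (mpAk G p τ k)
      ≤ (((∑ i ∈ Finset.range k,
            Finset.univ.sup' (Finset.univ_nonempty_iff.2 ⟨⟨0, hn⟩⟩) fun j => τ i j)
          + (p : ℝ) *
            ((Finset.range k).sup' (Finset.nonempty_range_iff.2 hk.ne') fun i =>
              Finset.univ.sup' (Finset.univ_nonempty_iff.2 ⟨⟨0, hn⟩⟩) fun j => τ i j) : ℝ) : MP) :=
  stmt12_general hn G hG p hub τ hτ k hk
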